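/- arXiv:1812.03341 — 7 statements merged into one kernel-verified Lean document; each statement's English description precedes it below -/
import Mathlib

section
/- Let a, ρ, γ₁, γ₂ be real numbers with 0 < ρ < a, γ₁ > 0 and γ₂ > 0. Then the two point vortices of the steady dipole configuration translate with a common horizontal speed, i.e. −γ₁/(4π(a−ρ)) + (γ₂/(4π))(1/a + 1/ρ) = γ₁/(4πρ) − γ₁/(4πa) + γ₂/(4π(a+ρ)), if and only if the compatibility condition γ₂ = ((a³+ρ³)/(a³−ρ³))·γ₁ holds. -/
/-!
Both speeds are `1 / (4π)` times a linear form in `(γ₁, γ₂)`, so equal speeds mean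
`γ₂ S = γ₁ D` with `S = 1/a + 1/ρ - 1/(a+ρ) = (a² + aρ + ρ²) / (aρ(a+ρ))` and
`D = 1/ρ - 1/a + 1/(a-ρ) = (a² - aρ + ρ²) / (aρ(a-ρ))`. Since `S > 0`, this reads `γ₂ = (D/S) γ₁`,
and `D/S = (a+ρ)(a² - aρ + ρ²) / ((a-ρ)(a² + aρ + ρ²)) = (a³ + ρ³) / (a³ - ρ³)`.
-/

open Real

section Field

variable {K : Type*} [Field K]

theorem translation_speeds_eq_iff {c a ρ γ₁ γ₂ : K} (hc : c ≠ 0) :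
    -γ₁ / (c * (a - ρ)) + γ₂ / c * (1 / a + 1 / ρ) =
        γ₁ / (c * ρ) - γ₁ / (c * a) + γ₂ / (c * (a + ρ)) ↔
      γ₂ * (1 / a + 1 / ρ - 1 / (a + ρ)) = γ₁ * (1 / ρ - 1 / a + 1 / (a - ρ)) := by
  have hdiff : -γ₁ / (c * (a - ρ)) + γ₂ / c * (1 / a + 1 / ρ) -
      (γ₁ / (c * ρ) - γ₁ / (c * a) + γ₂ / (c * (a + ρ))) =
      c⁻¹ * (γ₂ * (1 / a + 1 / ρ - 1 / (a + ρ)) - γ₁ * (1 / ρ - 1 / a + 1 / (a - ρ))) := by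
    simp only [mul_inv, div_eq_mul_inv]
    ring
  rw [← sub_eq_zero, hdiff, mul_eq_zero, or_iff_right (inv_ne_zero hc), sub_eq_zero]

theorem one_div_add_one_div_sub_one_div_add {a ρ : K} (ha : a ≠ 0) (hρ : ρ ≠ 0)
    (hs : a + ρ ≠ 0) :
    1 / a + 1 / ρ - 1 / (a + ρ) = (a ^ 2 + a * ρ + ρ ^ 2) / (a * ρ * (a + ρ)) := by
  field_simp
  ring

theorem one_div_sub_one_div_add_one_div_sub {a ρ : K} (ha : a ≠ 0) (hρ : ρ ≠ 0)
    (hd : a - ρ ≠ 0) :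
    1 / ρ - 1 / a + 1 / (a - ρ) = (a ^ 2 - a * ρ + ρ ^ 2) / (a * ρ * (a - ρ)) := by
  field_simp
  ring

theorem one_div_sums_ratio_eq {a ρ : K} (ha : a ≠ 0) (hρ : ρ ≠ 0) (hs : a + ρ ≠ 0)
    (hcube : a ^ 3 - ρ ^ 3 ≠ 0) :
    (1 / ρ - 1 / a + 1 / (a - ρ)) / (1 / a + 1 / ρ - 1 / (a + ρ)) =
      (a ^ 3 + ρ ^ 3) / (a ^ 3 - ρ ^ 3) := by
  have hfac : a ^ 3 - ρ ^ 3 = (a - ρ) * (a ^ 2 + a * ρ + ρ ^ 2) := by ring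
  obtain ⟨hd, -⟩ := mul_ne_zero_iff.mp (hfac ▸ hcube)
  rw [one_div_add_one_div_sub_one_div_add ha hρ hs, one_div_sub_one_div_add_one_div_sub ha hρ hd,
    hfac]
  field_simp
  ring

end Field

theorem dipole_common_speed_iff_compatibility_general
    (a ρ γ₁ γ₂ : ℝ) (hρ : 0 < ρ) (hρa : ρ < a) :
    -γ₁ / (4 * π * (a - ρ)) + (γ₂ / (4 * π)) * (1 / a + 1 / ρ) =
      γ₁ / (4 * π * ρ) - γ₁ / (4 * π * a) + γ₂ / (4 * π * (a + ρ)) ↔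
    γ₂ = ((a ^ 3 + ρ ^ 3) / (a ^ 3 - ρ ^ 3)) * γ₁ := by
  have ha : 0 < a := hρ.trans hρa
  have hcube : 0 < a ^ 3 - ρ ^ 3 := sub_pos.mpr (pow_lt_pow_left₀ hρa hρ.le three_ne_zero)
  have hS : 0 < 1 / a + 1 / ρ - 1 / (a + ρ) := by
    rw [one_div_add_one_div_sub_one_div_add ha.ne' hρ.ne' (by positivity)]
    positivity
  rw [translation_speeds_eq_iff (by positivity), mul_comm γ₁,
    ← one_div_sums_ratio_eq ha.ne' hρ.ne' (by positivity) hcube.ne', div_mul_eq_mul_div,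
    eq_div_iff hS.ne']

/-- The two point vortices of the steady dipole configuration translate with a common
horizontal speed if and only if the compatibility condition
`γ₂ = ((a³+ρ³)/(a³−ρ³))·γ₁` holds. -/
theorem dipole_common_speed_iff_compatibility
    (a ρ γ₁ γ₂ : ℝ) (hρ : 0 < ρ) (hρa : ρ < a) (hγ₁ : 0 < γ₁) (hγ₂ : 0 < γ₂) :
    -γ₁ / (4 * π * (a - ρ)) + (γ₂ / (4 * π)) * (1 / a + 1 / ρ) =
      γ₁ / (4 * π * ρ) - γ₁ / (4 * π * a) + γ₂ / (4 * π * (a + ρ)) ↔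
    γ₂ = ((a ^ 3 + ρ ^ 3) / (a ^ 3 - ρ ^ 3)) * γ₁ :=
  dipole_common_speed_iff_compatibility_general a ρ γ₁ γ₂ hρ hρa
end

section
/- Let a, ρ, γ₁ be real numbers with 0 < ρ < a and γ₁ > 0, and suppose γ₂ = ((a³+ρ³)/(a³−ρ³))·γ₁ (the compatibility condition). Let 𝒯 be the 2×2 real matrix with entries 𝒯₁₁ = −γ₁/(4π(a−ρ)²) + γ₂/(4πa²), 𝒯₁₂ = γ₁/(4π(a−ρ)²) + γ₂/(4πρ²), 𝒯₂₁ = −γ₁/(4πa²) + γ₂/(4π(a+ρ)²), 𝒯₂₂ = γ₂/(4π(a+ρ)²) + γ₁/(4πρ²). Then det 𝒯 = −(γ₁²/(16π²)) · 6(a⁴ − a²ρ² + ρ⁴) / ((a+ρ)(a−ρ)³(a²+aρ+ρ²)²); in particular det 𝒯 < 0, so 𝒯 is invertible. -/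
open Real Matrix

/-!
Substituting the compatibility condition `γ₂ = k γ₁` into `𝒯₁₁ 𝒯₂₂ - 𝒯₁₂ 𝒯₂₁` makes the
determinant `γ₁² / (16 π²)` times a rational function of `a` and `ρ`; clearing the
denominator `a³ - ρ³ = (a - ρ)(a² + aρ + ρ²)` gives the closed form. Its sign is that of
`-(a⁴ - a²ρ² + ρ⁴)`, and `a⁴ - a²ρ² + ρ⁴ = x² + xy + y²` with `x = a²`, `y = -ρ²` is a
positive definite binary quadratic form evaluated away from the origin.
-/

noncomputable def linearizedBlock (a ρ γ₁ γ₂ : ℝ) : Matrix (Fin 2) (Fin 2) ℝ :=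
  !![-γ₁ / (4 * π * (a - ρ) ^ 2) + γ₂ / (4 * π * a ^ 2),
      γ₁ / (4 * π * (a - ρ) ^ 2) + γ₂ / (4 * π * ρ ^ 2);
     -γ₁ / (4 * π * a ^ 2) + γ₂ / (4 * π * (a + ρ) ^ 2),
      γ₂ / (4 * π * (a + ρ) ^ 2) + γ₁ / (4 * π * ρ ^ 2)]

theorem sq_add_mul_add_sq_pos {x y : ℝ} (hy : y ≠ 0) : 0 < x ^ 2 + x * y + y ^ 2 := by
  nlinarith [sq_nonneg (2 * x + y), sq_pos_of_ne_zero hy]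

theorem det_linearizedBlock_of_compat {a ρ : ℝ} (ha : a ≠ 0) (hρ : ρ ≠ 0) (hρa : a - ρ ≠ 0)
    (haρ : a + ρ ≠ 0) (γ₁ : ℝ) :
    (linearizedBlock a ρ γ₁ ((a ^ 3 + ρ ^ 3) / (a ^ 3 - ρ ^ 3) * γ₁)).det =
      -(γ₁ ^ 2 / (16 * π ^ 2)) * (6 * (a ^ 4 - a ^ 2 * ρ ^ 2 + ρ ^ 4)) /
        ((a + ρ) * (a - ρ) ^ 3 * (a ^ 2 + a * ρ + ρ ^ 2) ^ 2) := by
  have hq : a ^ 2 + a * ρ + ρ ^ 2 ≠ 0 := (sq_add_mul_add_sq_pos hρ).ne'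
  have hcube : a ^ 3 - ρ ^ 3 ≠ 0 := by
    rw [show a ^ 3 - ρ ^ 3 = (a - ρ) * (a ^ 2 + a * ρ + ρ ^ 2) by ring]
    exact mul_ne_zero hρa hq
  rw [linearizedBlock, det_fin_two_of, eq_div_iff (by simp [*])]
  field_simp
  ring

theorem det_linearizedBlock_of_compat_neg {a ρ γ₁ : ℝ} (hρ : 0 < ρ) (hρa : ρ < a)
    (hγ₁ : γ₁ ≠ 0) : (linearizedBlock a ρ γ₁ ((a ^ 3 + ρ ^ 3) / (a ^ 3 - ρ ^ 3) * γ₁)).det < 0 := by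
  rw [det_linearizedBlock_of_compat (hρ.trans hρa).ne' hρ.ne' (sub_pos.mpr hρa).ne'
    (by linarith) γ₁]
  have hquartic : 0 < a ^ 4 - a ^ 2 * ρ ^ 2 + ρ ^ 4 := by
    have := sq_add_mul_add_sq_pos (x := a ^ 2) (y := -ρ ^ 2) (by simp [hρ.ne'])
    ring_nf at this ⊢
    exact this
  have hden : 0 < (a + ρ) * (a - ρ) ^ 3 * (a ^ 2 + a * ρ + ρ ^ 2) ^ 2 :=
    mul_pos (mul_pos (by linarith) (pow_pos (sub_pos.mpr hρa) 3))
      (pow_pos (sq_add_mul_add_sq_pos hρ.ne') 2)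
  refine div_neg_of_neg_of_pos (mul_neg_of_neg_of_pos ?_ (by positivity)) hden
  exact neg_neg_of_pos (by positivity)

/-- Under the compatibility condition, the determinant of the matrix `𝒯` of the
linearized operator equals the stated expression; in particular it is negative,
so `𝒯` is invertible. -/
theorem det_T_neg
    (a ρ γ₁ γ₂ : ℝ) (hρ : 0 < ρ) (hρa : ρ < a) (hγ₁ : 0 < γ₁)
    (hcompat : γ₂ = ((a ^ 3 + ρ ^ 3) / (a ^ 3 - ρ ^ 3)) * γ₁)
    (𝒯 : Matrix (Fin 2) (Fin 2) ℝ)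
    (h𝒯 : 𝒯 = !![-γ₁ / (4 * π * (a - ρ) ^ 2) + γ₂ / (4 * π * a ^ 2),
                   γ₁ / (4 * π * (a - ρ) ^ 2) + γ₂ / (4 * π * ρ ^ 2);
                  -γ₁ / (4 * π * a ^ 2) + γ₂ / (4 * π * (a + ρ) ^ 2),
                   γ₂ / (4 * π * (a + ρ) ^ 2) + γ₁ / (4 * π * ρ ^ 2)]) :
    𝒯.det = -(γ₁ ^ 2 / (16 * π ^ 2)) *
        (6 * (a ^ 4 - a ^ 2 * ρ ^ 2 + ρ ^ 4)) /
        ((a + ρ) * (a - ρ) ^ 3 * (a ^ 2 + a * ρ + ρ ^ 2) ^ 2) ∧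
      𝒯.det < 0 ∧ IsUnit 𝒯 := by
  subst hcompat
  have hdet := det_linearizedBlock_of_compat (hρ.trans hρa).ne' hρ.ne' (sub_pos.mpr hρa).ne'
    (by linarith) γ₁
  have hneg := det_linearizedBlock_of_compat_neg hρ hρa hγ₁.ne'
  rw [linearizedBlock, ← h𝒯] at hdet hneg
  exact ⟨hdet, hneg, (isUnit_iff_isUnit_det 𝒯).mpr hneg.ne.isUnit⟩
end

section
/- Let a, ρ, γ₁ be real numbers with 0 < ρ < a and γ₁ > 0, and suppose γ₂ = ((a³+ρ³)/(a³−ρ³))·γ₁ (the compatibility condition). Let 𝒯 be the 2×2 real matrix with entries 𝒯₁₁ = −γ₁/(4π(a−ρ)²) + γ₂/(4πa²), 𝒯₁₂ = γ₁/(4π(a−ρ)²) + γ₂/(4πρ²), 𝒯₂₁ = −γ₁/(4πa²) + γ₂/(4π(a+ρ)²), 𝒯₂₂ = γ₂/(4π(a+ρ)²) + γ₁/(4πρ²), and let (A, R) ∈ ℝ² be the unique solution of 𝒯·(A, R)ᵀ = (−1, −1)ᵀ. Then −γ₁·(A − R) + γ₂·(A + R) < 0. -/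
open Real Matrix

/-- If `(A, R)` solves `𝒯·(A,R)ᵀ = (−1,−1)ᵀ`, then the leading-order second derivative
of the moment of instability, `−γ₁(A−R) + γ₂(A+R)`, is negative. -/
theorem moment_of_instability_neg
    (a ρ γ₁ γ₂ : ℝ) (hρ : 0 < ρ) (hρa : ρ < a) (hγ₁ : 0 < γ₁)
    (hcompat : γ₂ = ((a ^ 3 + ρ ^ 3) / (a ^ 3 - ρ ^ 3)) * γ₁)
    (𝒯 : Matrix (Fin 2) (Fin 2) ℝ)
    (h𝒯 : 𝒯 = !![-γ₁ / (4 * π * (a - ρ) ^ 2) + γ₂ / (4 * π * a ^ 2),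
                   γ₁ / (4 * π * (a - ρ) ^ 2) + γ₂ / (4 * π * ρ ^ 2);
                  -γ₁ / (4 * π * a ^ 2) + γ₂ / (4 * π * (a + ρ) ^ 2),
                   γ₂ / (4 * π * (a + ρ) ^ 2) + γ₁ / (4 * π * ρ ^ 2)])
    (A R : ℝ) (hAR : 𝒯.mulVec ![A, R] = ![-1, -1]) :
    -γ₁ * (A - R) + γ₂ * (A + R) < 0 := by
  subst h𝒯 hcompat
  have hπ : (0:ℝ) < π := Real.pi_pos
  have hπ' : π ≠ 0 := ne_of_gt hπ
  have ha : (0:ℝ) < a := hρ.trans hρa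
  have ha' : a ≠ 0 := ne_of_gt ha
  have hρ' : ρ ≠ 0 := ne_of_gt hρ
  have hmn : a - ρ ≠ 0 := sub_ne_zero.mpr (ne_of_gt hρa)
  have hpl : a + ρ ≠ 0 := by positivity
  have h3 : a ^ 3 - ρ ^ 3 ≠ 0 := by
    have : ρ ^ 3 < a ^ 3 := by nlinarith [mul_pos hρ hρ, mul_pos (hρ.trans hρa) (hρ.trans hρa), sq_nonneg (a + ρ), sq_nonneg (a - ρ)]
    exact sub_ne_zero.mpr (ne_of_gt this)
  have hD : 0 < a ^ 4 - a ^ 2 * ρ ^ 2 + ρ ^ 4 := by nlinarith [sq_nonneg (a^2 - ρ^2), mul_pos (mul_pos ha ha) (mul_pos hρ hρ)]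
  have hD' : a ^ 4 - a ^ 2 * ρ ^ 2 + ρ ^ 4 ≠ 0 := ne_of_gt hD
  have e1 : (-γ₁ / (4 * π * (a - ρ) ^ 2) + ((a ^ 3 + ρ ^ 3) / (a ^ 3 - ρ ^ 3)) * γ₁ / (4 * π * a ^ 2)) * A
      + (γ₁ / (4 * π * (a - ρ) ^ 2) + ((a ^ 3 + ρ ^ 3) / (a ^ 3 - ρ ^ 3)) * γ₁ / (4 * π * ρ ^ 2)) * R = -1 := by
    have := congrFun hAR 0
    simpa [Matrix.mulVec, dotProduct, Fin.sum_univ_two] using this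
  have e2 : (-γ₁ / (4 * π * a ^ 2) + ((a ^ 3 + ρ ^ 3) / (a ^ 3 - ρ ^ 3)) * γ₁ / (4 * π * (a + ρ) ^ 2)) * A
      + (((a ^ 3 + ρ ^ 3) / (a ^ 3 - ρ ^ 3)) * γ₁ / (4 * π * (a + ρ) ^ 2) + γ₁ / (4 * π * ρ ^ 2)) * R = -1 := by
    have := congrFun hAR 1
    simpa [Matrix.mulVec, dotProduct, Fin.sum_univ_two] using this
  have key : -γ₁ * (A - R) + ((a ^ 3 + ρ ^ 3) / (a ^ 3 - ρ ^ 3)) * γ₁ * (A + R)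
      = -(8 * π * a ^ 2 * ρ ^ 2 * (a ^ 2 + ρ ^ 2)) / (a ^ 4 - a ^ 2 * ρ ^ 2 + ρ ^ 4) := by
    rw [eq_div_iff hD']
    linear_combination (norm := (field_simp; ring))
      (4 * π * (-(a - ρ) ^ 2 * a * ρ * (a ^ 2 + a * ρ + ρ ^ 2))) * e1
      + (4 * π * ((a + ρ) ^ 2 * a * ρ * (a ^ 2 - a * ρ + ρ ^ 2))) * e2
  rw [key]
  have hnum : 0 < 8 * π * a ^ 2 * ρ ^ 2 * (a ^ 2 + ρ ^ 2) := by positivity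
  have := div_pos hnum hD
  rw [neg_div]
  linarith
end

section
/- Let a, ρ, γ₁ be real numbers with 0 < ρ < a and γ₁ > 0, let γ₂ = ((a³+ρ³)/(a³−ρ³))·γ₁ (the compatibility condition), and set α = (γ₁γ₂/2)(1/ρ² − 1/a²), β = (γ₁γ₂/2)(1/ρ² + 1/a²), δ₁ = γ₁²/(a−ρ)², δ₂ = γ₂²/(a+ρ)². Then α² + αδ₁ + αδ₂ + δ₁δ₂ − β² > 0, i.e. (α+δ₁)(α+δ₂) > β². -/
/-!
Put `p = γ₁ / (a - ρ)` and `q = γ₂ / (a + ρ)`, so that `δ₁ = p²` and `δ₂ = q²`. Since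
`β - α = γ₁γ₂ / a²` and `β + α = γ₁γ₂ / ρ²`, while `α = (γ₁γ₂ / 2)(a² - ρ²) / (a²ρ²)`, one finds
`β² = α² + 2αpq`, and hence `(α + δ₁)(α + δ₂) - β² = α(p - q)² + (pq)²`, which is positive
because `γ₁, γ₂ > 0` give `α ≥ 0` and `pq ≠ 0`.
-/

lemma sq_lt_add_sq_mul_add_sq {α β p q : ℝ} (hα : 0 ≤ α) (hp : p ≠ 0) (hq : q ≠ 0)
    (hβ : β ^ 2 = α ^ 2 + 2 * α * p * q) :
    β ^ 2 < (α + p ^ 2) * (α + q ^ 2) := by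
  have hpq : 0 < (p * q) ^ 2 := by positivity
  nlinarith [mul_nonneg hα (sq_nonneg (p - q))]

lemma vortex_sq_identity {a ρ : ℝ} (ha : a ≠ 0) (hρ : ρ ≠ 0) (hsub : a - ρ ≠ 0)
    (hadd : a + ρ ≠ 0) (γ₁ γ₂ : ℝ) :
    (γ₁ * γ₂ / 2 * (1 / ρ ^ 2 + 1 / a ^ 2)) ^ 2 =
      (γ₁ * γ₂ / 2 * (1 / ρ ^ 2 - 1 / a ^ 2)) ^ 2
        + 2 * (γ₁ * γ₂ / 2 * (1 / ρ ^ 2 - 1 / a ^ 2)) * (γ₁ / (a - ρ)) * (γ₂ / (a + ρ)) := by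
  field_simp
  ring

lemma one_div_sq_sub_one_div_sq_nonneg {a ρ : ℝ} (hρ : 0 < ρ) (hρa : ρ ≤ a) :
    0 ≤ 1 / ρ ^ 2 - 1 / a ^ 2 :=
  sub_nonneg.2 (one_div_le_one_div_of_le (by positivity) (pow_le_pow_left₀ hρ.le hρa 2))

lemma compatibility_factor_pos {a ρ : ℝ} (hρ : 0 < ρ) (hρa : ρ < a) :
    0 < (a ^ 3 + ρ ^ 3) / (a ^ 3 - ρ ^ 3) := by
  have ha : 0 < a := hρ.trans hρa
  exact div_pos (by positivity) (sub_pos.2 (pow_lt_pow_left₀ hρa hρ.le three_ne_zero))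

/-- Under the compatibility condition, the quantity
`α² + αδ₁ + αδ₂ + δ₁δ₂ − β²` is positive, i.e. `(α+δ₁)(α+δ₂) > β²`. -/
theorem vortex_block_positivity
    (a ρ γ₁ γ₂ α β δ₁ δ₂ : ℝ) (hρ : 0 < ρ) (hρa : ρ < a) (hγ₁ : 0 < γ₁)
    (hcompat : γ₂ = ((a ^ 3 + ρ ^ 3) / (a ^ 3 - ρ ^ 3)) * γ₁)
    (hα : α = (γ₁ * γ₂ / 2) * (1 / ρ ^ 2 - 1 / a ^ 2))
    (hβ : β = (γ₁ * γ₂ / 2) * (1 / ρ ^ 2 + 1 / a ^ 2))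
    (hδ₁ : δ₁ = γ₁ ^ 2 / (a - ρ) ^ 2)
    (hδ₂ : δ₂ = γ₂ ^ 2 / (a + ρ) ^ 2) :
    α ^ 2 + α * δ₁ + α * δ₂ + δ₁ * δ₂ - β ^ 2 > 0 ∧
      (α + δ₁) * (α + δ₂) > β ^ 2 := by
  have ha : 0 < a := hρ.trans hρa
  have hsub : 0 < a - ρ := sub_pos.2 hρa
  have hadd : 0 < a + ρ := add_pos ha hρ
  have hγ₂ : 0 < γ₂ := hcompat ▸ mul_pos (compatibility_factor_pos hρ hρa) hγ₁
  have hα₀ : 0 ≤ α :=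
    hα ▸ mul_nonneg (by positivity) (one_div_sq_sub_one_div_sq_nonneg hρ hρa.le)
  have hβα : β ^ 2 = α ^ 2 + 2 * α * (γ₁ / (a - ρ)) * (γ₂ / (a + ρ)) := by
    rw [hα, hβ]
    exact vortex_sq_identity ha.ne' hρ.ne' hsub.ne' hadd.ne' γ₁ γ₂
  have key := sq_lt_add_sq_mul_add_sq hα₀ (div_pos hγ₁ hsub).ne' (div_pos hγ₂ hadd).ne' hβα
  rw [div_pow, div_pow, ← hδ₁, ← hδ₂] at key
  exact ⟨by linarith, key⟩
end

section
/- Let a, ρ, γ₁ be real numbers with 0 < ρ < a and γ₁ > 0, let γ₂ = ((a³+ρ³)/(a³−ρ³))·γ₁ (the compatibility condition), and set α = (γ₁γ₂/2)(1/ρ² − 1/a²), β = (γ₁γ₂/2)(1/ρ² + 1/a²), δ₁ = γ₁²/(a−ρ)², δ₂ = γ₂²/(a+ρ)². Then (2α + δ₁ + δ₂ − √((δ₁−δ₂)² + 4β²)) / 2 > 0. -/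
/-!
The smaller eigenvalue `(p + q - √((p - q)² + 4b²))/2` of a symmetric `2 × 2` matrix
`[[p, -b], [-b, q]]` is positive as soon as its trace and determinant are. Here the trace is
positive because `α > 0`, and under the compatibility condition the determinant collapses to an
explicit quotient of positive factors (`block_det_eq`).
-/

open Real

theorem add_sub_sqrt_discrim_pos {p q b : ℝ} (htr : 0 < p + q) (hdet : 0 < p * q - b ^ 2) :
    0 < p + q - √((p - q) ^ 2 + 4 * b ^ 2) := by
  have hlt : (p - q) ^ 2 + 4 * b ^ 2 < (p + q) ^ 2 := by nlinarith
  linarith [(Real.sqrt_lt' htr).mpr hlt]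

theorem block_det_eq {a ρ γ₁ γ₂ α β δ₁ δ₂ : ℝ} (hρ : 0 < ρ) (hρa : ρ < a)
    (hcompat : γ₂ = ((a ^ 3 + ρ ^ 3) / (a ^ 3 - ρ ^ 3)) * γ₁)
    (hα : α = (γ₁ * γ₂ / 2) * (1 / ρ ^ 2 - 1 / a ^ 2))
    (hβ : β = (γ₁ * γ₂ / 2) * (1 / ρ ^ 2 + 1 / a ^ 2))
    (hδ₁ : δ₁ = γ₁ ^ 2 / (a - ρ) ^ 2)
    (hδ₂ : δ₂ = γ₂ ^ 2 / (a + ρ) ^ 2) :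
    (δ₁ + α) * (δ₂ + α) - β ^ 2 = 3 * γ₁ ^ 4 * (a ^ 6 + ρ ^ 6) * (a ^ 3 + ρ ^ 3)
      / ((a - ρ) ^ 4 * (a + ρ) * (a ^ 2 + ρ ^ 2) * (a ^ 2 + a * ρ + ρ ^ 2) ^ 3) := by
  have hsub : a - ρ ≠ 0 := sub_ne_zero.mpr hρa.ne'
  have hcube : a ^ 3 - ρ ^ 3 = (a - ρ) * (a ^ 2 + a * ρ + ρ ^ 2) := by ring
  have ha : 0 < a := hρ.trans hρa
  have hQ : 0 < a ^ 2 + a * ρ + ρ ^ 2 := by positivity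
  have hS : 0 < a ^ 2 + ρ ^ 2 := by positivity
  have hadd : 0 < a + ρ := by positivity
  subst hcompat hα hβ hδ₁ hδ₂
  rw [hcube]
  field_simp
  ring

/-- Under the compatibility condition, the smallest eigenvalue
`(2α + δ₁ + δ₂ − √((δ₁−δ₂)² + 4β²))/2` of the 2×2 block is positive. -/
theorem smallest_eigenvalue_pos
    (a ρ γ₁ γ₂ α β δ₁ δ₂ : ℝ) (hρ : 0 < ρ) (hρa : ρ < a) (hγ₁ : 0 < γ₁)
    (hcompat : γ₂ = ((a ^ 3 + ρ ^ 3) / (a ^ 3 - ρ ^ 3)) * γ₁)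
    (hα : α = (γ₁ * γ₂ / 2) * (1 / ρ ^ 2 - 1 / a ^ 2))
    (hβ : β = (γ₁ * γ₂ / 2) * (1 / ρ ^ 2 + 1 / a ^ 2))
    (hδ₁ : δ₁ = γ₁ ^ 2 / (a - ρ) ^ 2)
    (hδ₂ : δ₂ = γ₂ ^ 2 / (a + ρ) ^ 2) :
    (2 * α + δ₁ + δ₂ - Real.sqrt ((δ₁ - δ₂) ^ 2 + 4 * β ^ 2)) / 2 > 0 := by
  have ha : 0 < a := hρ.trans hρa
  have hsub : 0 < a - ρ := sub_pos.mpr hρa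
  have hγ₂ : 0 < γ₂ := by
    rw [hcompat]
    have hcube_pos : 0 < a ^ 3 - ρ ^ 3 := sub_pos.mpr (pow_lt_pow_left₀ hρa hρ.le three_ne_zero)
    positivity
  have hα_pos : 0 < α := by
    have hinv : 1 / a ^ 2 < 1 / ρ ^ 2 := one_div_lt_one_div_of_lt (by positivity) (by gcongr)
    rw [hα]
    exact mul_pos (by positivity) (sub_pos.mpr hinv)
  have htr : 0 < (δ₁ + α) + (δ₂ + α) := by
    have hδ₁_nonneg : 0 ≤ δ₁ := by rw [hδ₁]; positivity
    have hδ₂_nonneg : 0 ≤ δ₂ := by rw [hδ₂]; positivity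
    linarith
  have hdet : 0 < (δ₁ + α) * (δ₂ + α) - β ^ 2 := by
    rw [block_det_eq hρ hρa hcompat hα hβ hδ₁ hδ₂]
    positivity
  have key := add_sub_sqrt_discrim_pos htr hdet
  rw [add_sub_add_right_eq_sub] at key
  linarith
end

section
/- Let a, ρ, γ₁ be real numbers with 0 < ρ < a and γ₁ > 0, let γ₂ = ((a³+ρ³)/(a³−ρ³))·γ₁ (the compatibility condition), and set α = (γ₁γ₂/2)(1/ρ² − 1/a²), β = (γ₁γ₂/2)(1/ρ² + 1/a²), δ₁ = γ₁²/(a−ρ)², δ₂ = γ₂²/(a+ρ)². Let M be the symmetric 4×4 real matrix M = [[−α, 0, α, 0], [0, δ₁+α, 0, −β], [α, 0, −α, 0], [0, −β, 0, δ₂+α]]. Then, counted with algebraic multiplicity, M has exactly one negative eigenvalue (namely −2α), 0 is an eigenvalue of multiplicity exactly one, and the remaining two eigenvalues are strictly positive. -/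
/-!
The coordinates `{0, 2}` and `{1, 3}` decouple. On the first pair `M` acts as
`α • !![-1, 1; 1, -1]`, with eigenvalues `0` and `-2α`, and `α > 0`. The second pair carries the
symmetric block `!![δ₁ + α, -β; -β, δ₂ + α]`, whose determinant is positive precisely because of
the compatibility condition; with its positive trace this gives two positive eigenvalues.
-/

open Real Matrix Polynomial

theorem charpoly_vortexBlock {R : Type*} [CommRing R] (α β p q : R) :
    (!![-α, 0, α, 0; 0, p, 0, -β; α, 0, -α, 0; 0, -β, 0, q] : Matrix (Fin 4) (Fin 4) R).charpoly
      = X * (X + C (2 * α)) * (X ^ 2 - C (p + q) * X + C (p * q - β ^ 2)) := by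
  rw [Matrix.charpoly, Matrix.det_succ_row_zero]
  simp [Fin.sum_univ_succ, Matrix.det_fin_three, Fin.succAbove, map_ofNat]
  ring

theorem exists_pos_roots_of_sq_lt_mul {p q β : ℝ} (hpq : 0 < p + q) (hβ : β ^ 2 < p * q) :
    ∃ r₁ r₂ : ℝ, 0 < r₁ ∧ 0 < r₂ ∧
      (X ^ 2 - C (p + q) * X + C (p * q - β ^ 2) : ℝ[X]) = (X - C r₁) * (X - C r₂) := by
  obtain ⟨hs₀, hs⟩ : 0 ≤ √((p - q) ^ 2 + 4 * β ^ 2) ∧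
      √((p - q) ^ 2 + 4 * β ^ 2) ^ 2 = (p - q) ^ 2 + 4 * β ^ 2 :=
    ⟨Real.sqrt_nonneg _, Real.sq_sqrt (by positivity)⟩
  set s := √((p - q) ^ 2 + 4 * β ^ 2)
  have hsT : s < p + q := lt_of_pow_lt_pow_left₀ 2 hpq.le (by nlinarith)
  refine ⟨(p + q - s) / 2, (p + q + s) / 2, by linarith, by linarith, ?_⟩
  have hsum : C (p + q) = C ((p + q - s) / 2) + C ((p + q + s) / 2) := by
    rw [← C_add]; ring_nf
  have hprod : p * q - β ^ 2 = (p + q - s) / 2 * ((p + q + s) / 2) := by nlinarith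
  rw [hprod, C_mul, hsum]
  ring

theorem signature_of_eq_X_mul_X_add_C_mul {c r₁ r₂ : ℝ} (hc : 0 < c) (hr₁ : 0 < r₁)
    (hr₂ : 0 < r₂) {P : ℝ[X]} (hP : P = X * (X + C c) * ((X - C r₁) * (X - C r₂))) :
    P.roots.filter (fun x => x < 0) = {-c} ∧ P.rootMultiplicity 0 = 1 ∧
      (P.roots.filter (fun x => 0 < x)).card = 2 := by
  have hroots : P.roots = {0, -c, r₁, r₂} := by
    have : P = (Multiset.map (fun t => X - C t) {0, -c, r₁, r₂}).prod := by
      simp [hP, mul_assoc]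
    rw [this, roots_multiset_prod_X_sub_C]
  rw [← count_roots, hroots]
  refine ⟨?_, ?_, ?_⟩
  · simp [Multiset.filter_singleton, hc, lt_asymm hr₁, lt_asymm hr₂]
  · simp [hc.ne', hr₁.ne, hr₂.ne]
  · simp [Multiset.filter_singleton, lt_asymm hc, hr₁, hr₂]

section VortexPair

variable {a ρ γ₁ γ₂ : ℝ}

theorem gamma₂_pos_of_compat (hρ : 0 < ρ) (hρa : ρ < a) (hγ₁ : 0 < γ₁)
    (hcompat : γ₂ = ((a ^ 3 + ρ ^ 3) / (a ^ 3 - ρ ^ 3)) * γ₁) : 0 < γ₂ := by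
  have : ρ ^ 3 < a ^ 3 := by gcongr
  have : 0 < a ^ 3 - ρ ^ 3 := by linarith
  have : 0 < a := hρ.trans hρa
  rw [hcompat]
  positivity

theorem alpha_pos (hρ : 0 < ρ) (hρa : ρ < a) (hγ₁ : 0 < γ₁) (hγ₂ : 0 < γ₂) :
    0 < (γ₁ * γ₂ / 2) * (1 / ρ ^ 2 - 1 / a ^ 2) := by
  have : 1 / a ^ 2 < 1 / ρ ^ 2 := by gcongr
  have : 0 < 1 / ρ ^ 2 - 1 / a ^ 2 := by linarith
  positivity

theorem vortex_det_pos {α β δ₁ δ₂ : ℝ} (hρ : 0 < ρ) (hρa : ρ < a) (hγ₁ : 0 < γ₁)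
    (hcompat : γ₂ = ((a ^ 3 + ρ ^ 3) / (a ^ 3 - ρ ^ 3)) * γ₁)
    (hα : α = (γ₁ * γ₂ / 2) * (1 / ρ ^ 2 - 1 / a ^ 2))
    (hβ : β = (γ₁ * γ₂ / 2) * (1 / ρ ^ 2 + 1 / a ^ 2))
    (hδ₁ : δ₁ = γ₁ ^ 2 / (a - ρ) ^ 2) (hδ₂ : δ₂ = γ₂ ^ 2 / (a + ρ) ^ 2) :
    β ^ 2 < (δ₁ + α) * (δ₂ + α) := by
  have ha : 0 < a := hρ.trans hρa
  have hsub : 0 < a - ρ := sub_pos.2 hρa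
  have hcube : 0 < a ^ 3 - ρ ^ 3 := by
    have : ρ ^ 3 < a ^ 3 := by gcongr
    linarith
  have hdet : (δ₁ + α) * (δ₂ + α) - β ^ 2 = 3 * γ₁ ^ 4 *
      (a ^ 5 * (a - ρ) + a * ρ ^ 3 * ((a - ρ) * (a + ρ)) + ρ ^ 6) /
      ((a - ρ) * (a ^ 3 - ρ ^ 3) ^ 3) := by
    subst hα hβ hδ₁ hδ₂ hcompat
    field_simp
    ring
  have : 0 < (δ₁ + α) * (δ₂ + α) - β ^ 2 := by rw [hdet]; positivity
  linarith

end VortexPair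

/-- Under the compatibility condition, the point-vortex block `M` of the second variation
of the augmented Hamiltonian has, counted with algebraic multiplicity, exactly one
negative eigenvalue (namely `−2α`), a simple zero eigenvalue, and two strictly positive
eigenvalues. -/
theorem vortex_block_spectrum
    (a ρ γ₁ γ₂ α β δ₁ δ₂ : ℝ) (hρ : 0 < ρ) (hρa : ρ < a) (hγ₁ : 0 < γ₁)
    (hcompat : γ₂ = ((a ^ 3 + ρ ^ 3) / (a ^ 3 - ρ ^ 3)) * γ₁)
    (hα : α = (γ₁ * γ₂ / 2) * (1 / ρ ^ 2 - 1 / a ^ 2))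
    (hβ : β = (γ₁ * γ₂ / 2) * (1 / ρ ^ 2 + 1 / a ^ 2))
    (hδ₁ : δ₁ = γ₁ ^ 2 / (a - ρ) ^ 2)
    (hδ₂ : δ₂ = γ₂ ^ 2 / (a + ρ) ^ 2)
    (M : Matrix (Fin 4) (Fin 4) ℝ)
    (hM : M = !![-α, 0, α, 0;
                  0, δ₁ + α, 0, -β;
                  α, 0, -α, 0;
                  0, -β, 0, δ₂ + α]) :
    M.charpoly.roots.filter (fun x => x < 0) = {-(2 * α)} ∧
    M.charpoly.rootMultiplicity 0 = 1 ∧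
    (M.charpoly.roots.filter (fun x => 0 < x)).card = 2 := by
  have hαpos : 0 < α := hα ▸ alpha_pos hρ hρa hγ₁ (gamma₂_pos_of_compat hρ hρa hγ₁ hcompat)
  have hδ₁nonneg : 0 ≤ δ₁ := hδ₁ ▸ by positivity
  have hδ₂nonneg : 0 ≤ δ₂ := hδ₂ ▸ by positivity
  obtain ⟨r₁, r₂, hr₁, hr₂, hquad⟩ := exists_pos_roots_of_sq_lt_mul (by linarith)
    (vortex_det_pos hρ hρa hγ₁ hcompat hα hβ hδ₁ hδ₂)
  refine signature_of_eq_X_mul_X_add_C_mul (by positivity) hr₁ hr₂ ?_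
  rw [hM, charpoly_vortexBlock, hquad]
end

section
/- Let p ∈ ℝ² and let Ψ : ℝ² → ℝ be continuously differentiable on an open neighborhood of p. Then lim_{r → 0⁺} ∫₀^{2π} [ sin θ · ( ∇Ψ(p + r(cos θ, sin θ)) · (cos θ, sin θ) ) + (sin θ / r) · Ψ(p + r(cos θ, sin θ)) ] dθ = 2π · ∂Ψ/∂x₂ (p). -/
open Real Filter

/-- The small-circle limit: if `Ψ` is continuously differentiable on an open neighborhood
of `p`, then
`∫₀^{2π} [ sinθ · ∇Ψ(p + r(cosθ,sinθ))·(cosθ,sinθ) + (sinθ/r) Ψ(p + r(cosθ,sinθ)) ] dθ`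
tends to `2π·∂Ψ/∂x₂(p)` as `r → 0⁺`. -/
theorem small_circle_limit
    (p : ℝ × ℝ) (Ψ : ℝ × ℝ → ℝ)
    (U : Set (ℝ × ℝ)) (hU : IsOpen U) (hp : p ∈ U) (hΨ : ContDiffOn ℝ 1 Ψ U) :
    Tendsto
      (fun r : ℝ =>
        ∫ θ in (0:ℝ)..(2 * π),
          (Real.sin θ *
              (fderiv ℝ Ψ (p + r • (Real.cos θ, Real.sin θ)) (Real.cos θ, Real.sin θ)) +
            (Real.sin θ / r) * Ψ (p + r • (Real.cos θ, Real.sin θ))))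
      (nhdsWithin 0 (Set.Ioi 0))
      (nhds (2 * π * fderiv ℝ Ψ p (0, 1))) := by
  obtain ⟨ε, hε, hball⟩ := Metric.isOpen_iff.1 hU p hp
  -- circle point and its norm bound
  set e : ℝ → ℝ × ℝ := fun θ => (Real.cos θ, Real.sin θ) with he
  have hecont : Continuous e := (continuous_cos.prodMk continuous_sin)
  have hnorm_e : ∀ θ, ‖e θ‖ ≤ 1 := by
    intro θ
    rw [Prod.norm_def]
    exact max_le (by simpa using abs_cos_le_one θ) (by simpa using abs_sin_le_one θ)
  have hmem : ∀ r : ℝ, 0 ≤ r → r < ε → ∀ θ, p + r • e θ ∈ U := by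
    intro r hr0 hrε θ
    apply hball
    rw [Metric.mem_ball, dist_eq_norm]
    have : ‖p + r • e θ - p‖ = ‖r • e θ‖ := by ring_nf
    rw [this, norm_smul, Real.norm_eq_abs, abs_of_nonneg hr0]
    calc r * ‖e θ‖ ≤ r * 1 := by nlinarith [hnorm_e θ, norm_nonneg (e θ)]
    _ < ε := by linarith
  have hfderivU : ContinuousOn (fderiv ℝ Ψ) U :=
    hΨ.continuousOn_fderiv_of_isOpen hU le_rfl
  have hhasF : ∀ x ∈ U, HasFDerivAt Ψ (fderiv ℝ Ψ x) x := fun x hx =>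
    ((hΨ.differentiableOn one_ne_zero x hx).differentiableAt (hU.mem_nhds hx)).hasFDerivAt
  -- key vector identity
  have hkey : ∀ θ : ℝ, Real.sin θ • e θ + Real.cos θ • (-Real.sin θ, Real.cos θ)
      = ((0 : ℝ), (1 : ℝ)) := by
    intro θ
    simp only [he, Prod.smul_mk, Prod.mk_add_mk, smul_eq_mul, Prod.mk.injEq]
    constructor <;> nlinarith [sin_sq_add_cos_sq θ]
  -- Step B: for 0 < r < ε, the integral equals ∫ DΨ(p + r e θ)(0,1)
  have hstepB : ∀ r : ℝ, 0 < r → r < ε →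
      (∫ θ in (0:ℝ)..(2 * π),
        (Real.sin θ * (fderiv ℝ Ψ (p + r • e θ) (e θ)) +
          (Real.sin θ / r) * Ψ (p + r • e θ)))
      = ∫ θ in (0:ℝ)..(2 * π), fderiv ℝ Ψ (p + r • e θ) ((0:ℝ), (1:ℝ)) := by
    intro r hr0 hrε
    set q : ℝ → ℝ × ℝ := fun θ => p + r • e θ with hq
    have hqmem : ∀ θ, q θ ∈ U := hmem r hr0.le hrε
    have hqcont : Continuous q := continuous_const.add (hecont.const_smul r)
    have hDcont : Continuous fun θ => fderiv ℝ Ψ (q θ) :=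
      hfderivU.comp_continuous hqcont hqmem
    have hqderiv : ∀ θ, HasDerivAt q (r • (-Real.sin θ, Real.cos θ)) θ := by
      intro θ
      exact (((hasDerivAt_cos θ).prodMk (hasDerivAt_sin θ)).const_smul r).const_add p
    have hcomp : ∀ θ, HasDerivAt (fun θ => Ψ (q θ))
        (fderiv ℝ Ψ (q θ) (r • (-Real.sin θ, Real.cos θ))) θ := fun θ =>
      (hhasF (q θ) (hqmem θ)).comp_hasDerivAt θ (hqderiv θ)
    set F : ℝ → ℝ := fun θ => (-Real.cos θ) * Ψ (q θ) with hF
    set F' : ℝ → ℝ := fun θ =>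
      Real.sin θ * Ψ (q θ) + (-Real.cos θ) * (fderiv ℝ Ψ (q θ) (r • (-Real.sin θ, Real.cos θ)))
      with hF'
    have hFderiv : ∀ θ, HasDerivAt F (F' θ) θ := by
      intro θ
      have h : HasDerivAt (fun θ => -Real.cos θ * Ψ (q θ))
          (-(-Real.sin θ) * Ψ (q θ) + -Real.cos θ * fderiv ℝ Ψ (q θ) (r • (-Real.sin θ, Real.cos θ))) θ :=
        ((hasDerivAt_cos θ).neg).mul (hcomp θ)
      convert h using 1
      simp only [hF']
      ring
    have hΨqcont : Continuous fun θ => Ψ (q θ) :=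
      (hΨ.continuousOn.comp_continuous hqcont hqmem)
    have hF'cont : Continuous F' := by
      apply (continuous_sin.mul hΨqcont).add
      exact (continuous_cos.neg).mul (hDcont.clm_apply
        ((continuous_sin.neg.prodMk continuous_cos).const_smul r))
    have hint : (∫ θ in (0:ℝ)..(2 * π), F' θ) = F (2 * π) - F 0 :=
      intervalIntegral.integral_eq_sub_of_hasDerivAt (fun θ _ => hFderiv θ)
        (hF'cont.intervalIntegrable _ _)
    have hper : F (2 * π) - F 0 = 0 := by
      simp [hF, hq, he, Real.cos_two_pi, Real.sin_two_pi]
    -- pointwise identity: integrand = G θ + (1/r) F' θ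
    have hptwise : ∀ θ,
        (Real.sin θ * (fderiv ℝ Ψ (q θ) (e θ)) + (Real.sin θ / r) * Ψ (q θ))
        = fderiv ℝ Ψ (q θ) ((0:ℝ), (1:ℝ)) + (1 / r) * F' θ := by
      intro θ
      have h1 : fderiv ℝ Ψ (q θ) ((0:ℝ), (1:ℝ))
          = Real.sin θ * (fderiv ℝ Ψ (q θ) (e θ))
            + Real.cos θ * (fderiv ℝ Ψ (q θ) (-Real.sin θ, Real.cos θ)) := by
        rw [← hkey θ, map_add, map_smul, map_smul, smul_eq_mul, smul_eq_mul]
      have h2 : fderiv ℝ Ψ (q θ) (r • (-Real.sin θ, Real.cos θ))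
          = r * fderiv ℝ Ψ (q θ) (-Real.sin θ, Real.cos θ) := by
        rw [map_smul, smul_eq_mul]
      rw [h1]
      simp only [hF', h2]
      field_simp
      ring
    rw [intervalIntegral.integral_congr (g := fun θ =>
        fderiv ℝ Ψ (q θ) ((0:ℝ), (1:ℝ)) + (1 / r) * F' θ) (fun θ _ => hptwise θ)]
    have hGcont : Continuous fun θ => fderiv ℝ Ψ (q θ) ((0:ℝ), (1:ℝ)) :=
      hDcont.clm_apply continuous_const
    rw [intervalIntegral.integral_add (g := fun θ => (1 / r) * F' θ) (hGcont.intervalIntegrable _ _)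
        ((continuous_const.mul hF'cont : Continuous fun θ => (1 / r) * F' θ).intervalIntegrable _ _),
      intervalIntegral.integral_const_mul, hint, hper]
    ring
  -- Step C: dominated convergence
  set G : ℝ → ℝ → ℝ := fun r θ => fderiv ℝ Ψ (p + r • e θ) ((0:ℝ), (1:ℝ)) with hG
  have hKU : Metric.closedBall p (ε / 2) ⊆ U := fun x hx =>
    hball (lt_of_le_of_lt (Metric.mem_closedBall.1 hx) (by linarith))
  obtain ⟨C, hC⟩ := (isCompact_closedBall p (ε / 2)).exists_bound_of_continuousOn
    (hfderivU.mono hKU)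
  have hmemK : ∀ r : ℝ, 0 ≤ r → r ≤ ε / 2 → ∀ θ, p + r • e θ ∈ Metric.closedBall p (ε / 2) := by
    intro r hr0 hrε θ
    rw [Metric.mem_closedBall, dist_eq_norm]
    have : ‖p + r • e θ - p‖ = ‖r • e θ‖ := by ring_nf
    rw [this, norm_smul, Real.norm_eq_abs, abs_of_nonneg hr0]
    nlinarith [hnorm_e θ, norm_nonneg (e θ)]
  have hGlim : Tendsto (fun r => ∫ θ in (0:ℝ)..(2 * π), G r θ)
      (nhdsWithin 0 (Set.Ioi 0)) (nhds (2 * π * fderiv ℝ Ψ p (0, 1))) := by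
    have hconst : (∫ θ in (0:ℝ)..(2 * π), fderiv ℝ Ψ p ((0:ℝ), (1:ℝ)))
        = 2 * π * fderiv ℝ Ψ p (0, 1) := by
      rw [intervalIntegral.integral_const]; ring_nf
    rw [← hconst]
    apply intervalIntegral.tendsto_integral_filter_of_dominated_convergence (bound := fun _ => C)
    · filter_upwards [Ioo_mem_nhdsGT_of_mem (show (0:ℝ) ∈ Set.Ico 0 (ε/2) from ⟨le_rfl, half_pos hε⟩)]
        with r hr
      have hqmem : ∀ θ, p + r • e θ ∈ U := hmem r hr.1.le (by linarith [hr.2])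
      have hqcont : Continuous fun θ => p + r • e θ :=
        continuous_const.add (hecont.const_smul r)
      exact (((hfderivU.comp_continuous hqcont hqmem).clm_apply
        continuous_const)).aestronglyMeasurable
    · filter_upwards [Ioo_mem_nhdsGT_of_mem (show (0:ℝ) ∈ Set.Ico 0 (ε/2) from ⟨le_rfl, half_pos hε⟩)]
        with r hr
      filter_upwards with θ _
      have hx : p + r • e θ ∈ Metric.closedBall p (ε / 2) :=
        hmemK r hr.1.le hr.2.le θ
      calc ‖G r θ‖ ≤ ‖fderiv ℝ Ψ (p + r • e θ)‖ * ‖((0:ℝ), (1:ℝ))‖ :=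
            ContinuousLinearMap.le_opNorm _ _
        _ ≤ C * 1 := by
            have hC0 : (0:ℝ) ≤ C :=
              (norm_nonneg _).trans (hC p (Metric.mem_closedBall_self (half_pos hε).le))
            have h01 : ‖((0:ℝ), (1:ℝ))‖ ≤ 1 := by rw [Prod.norm_def]; simp
            exact mul_le_mul (hC _ hx) h01 (norm_nonneg _) hC0
        _ = C := mul_one C
    · exact intervalIntegrable_const
    · filter_upwards with θ _
      have h1 : Tendsto (fun r : ℝ => p + r • e θ) (nhdsWithin 0 (Set.Ioi 0)) (nhds p) := by
        have : Continuous fun r : ℝ => p + r • e θ :=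
          continuous_const.add (continuous_id.smul continuous_const)
        have h0 := this.tendsto 0
        simp only [zero_smul, add_zero] at h0
        exact h0.mono_left nhdsWithin_le_nhds
      have h2 : ContinuousAt (fderiv ℝ Ψ) p := hfderivU.continuousAt (hU.mem_nhds hp)
      have h3 : Tendsto (fun r : ℝ => fderiv ℝ Ψ (p + r • e θ))
          (nhdsWithin 0 (Set.Ioi 0)) (nhds (fderiv ℝ Ψ p)) := h2.tendsto.comp h1
      exact ((ContinuousLinearMap.apply ℝ ℝ ((0:ℝ), (1:ℝ))).continuous.tendsto _).comp h3
  apply hGlim.congr'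
  filter_upwards [Ioo_mem_nhdsGT_of_mem (show (0:ℝ) ∈ Set.Ico 0 ε from ⟨le_rfl, hε⟩)] with r hr
  exact (hstepB r hr.1 hr.2).symm
end
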